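/- For every x in (−1,0), the supremum over a ∈ [−1,1] of (a²/2)·V̂₂''(x) − (4a + 9/2)·V̂₂(x) equals 0, and the supremum is attained at a = −1; equivalently, sup_{a∈[−1,1]}[(a²/2)·V̂₂''(x) − (4a+9/2)·V̂₂(x)] − f(x) = 0 on (−1,0), where f(x) = 0 for x < 0. -/

import Mathlib

/-! On `(-1, 0)` the function `V̂₂ = -2 sinh` satisfies `V̂₂'' = V̂₂ > 0`, so the Hamiltonian
`(a²/2) V̂₂'' - (4a + 9/2) V̂₂` factors as `(a + 1)(a - 9)/2 · V̂₂(x)`, which is nonpositive on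
`[-1, 1]` and vanishes at `a = -1`. -/

/-- The candidate value function of the infinite-horizon control problem with
control set `A = [-1, 1]`. -/
noncomputable def Vhat2 (x : ℝ) : ℝ :=
  if 0 ≤ x then -Real.sinh (2 * x) else -2 * Real.sinh x

open Real Set Filter Topology

lemma Vhat2_of_neg {x : ℝ} (hx : x < 0) : Vhat2 x = -2 * sinh x :=
  if_neg hx.not_ge

lemma Vhat2_eventuallyEq_of_neg {x : ℝ} (hx : x < 0) :
    Vhat2 =ᶠ[𝓝 x] fun y => -2 * sinh y := by
  filter_upwards [Iio_mem_nhds hx] with y hy using Vhat2_of_neg hy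

lemma deriv_deriv_Vhat2_of_neg {x : ℝ} (hx : x < 0) : deriv (deriv Vhat2) x = Vhat2 x := by
  have hD : deriv Vhat2 =ᶠ[𝓝 x] fun y => -2 * cosh y := by
    filter_upwards [Iio_mem_nhds hx] with y hy
    simp [(Vhat2_eventuallyEq_of_neg hy).deriv_eq]
  simp [hD.deriv_eq, Vhat2_of_neg hx]

lemma Vhat2_pos_of_neg {x : ℝ} (hx : x < 0) : 0 < Vhat2 x := by
  rw [Vhat2_of_neg hx]
  nlinarith [sinh_neg_iff.mpr hx]

lemma isGreatest_hamiltonian {v : ℝ} (hv : 0 ≤ v) :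
    IsGreatest ((fun a : ℝ => a ^ 2 / 2 * v - (4 * a + 9 / 2) * v) '' Icc (-1) 1) 0 := by
  have hfactor (a : ℝ) : a ^ 2 / 2 * v - (4 * a + 9 / 2) * v = (a + 1) * (a - 9) / 2 * v := by
    ring
  refine ⟨⟨-1, by norm_num, by simp only [hfactor]; ring⟩, ?_⟩
  rintro _ ⟨a, ⟨ha₁, ha₂⟩, rfl⟩
  have hq : (a + 1) * (a - 9) / 2 ≤ 0 := by nlinarith
  simpa only [hfactor] using mul_nonpos_of_nonpos_of_nonneg hq hv

/-- For every `x ∈ (-1,0)`, the supremum over `a ∈ [-1,1]` of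
`(a²/2) V̂₂''(x) - (4a + 9/2) V̂₂(x)` equals `0` and is attained at `a = -1`
(the running cost `f` vanishes for `x < 0`). -/
theorem Vhat2_HJB_neg (x : ℝ) (hx : x ∈ Set.Ioo (-1 : ℝ) 0) :
    IsGreatest
      ((fun a : ℝ => a ^ 2 / 2 * deriv (deriv Vhat2) x - (4 * a + 9 / 2) * Vhat2 x) ''
        Set.Icc (-1 : ℝ) 1) 0 ∧
    ((-1 : ℝ) ^ 2 / 2 * deriv (deriv Vhat2) x - (4 * (-1) + 9 / 2) * Vhat2 x = 0) := by
  rw [deriv_deriv_Vhat2_of_neg hx.2]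
  exact ⟨isGreatest_hamiltonian (Vhat2_pos_of_neg hx.2).le, by ring⟩
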